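/- arXiv:1710.06626 — 3 statements merged into one kernel-verified Lean document; each statement's English description precedes it below -/
import Mathlib

section
/- Let Λ = {λ_{ij}} and M = {μ_{ij}} be real 2×2 matrices such that the quadratic form ξ ↦ ∑_{i,j} μ_{ij} ξ_j ξ_i is nonnegative on ℝ² and the quadratic form ξ ↦ ∑_{i,j} (3λ_{ij}+2μ_{ij}) ξ_j ξ_i is nonnegative on ℝ². Then for all real 3×3 matrices A₁, A₂ one has ∑_{i=1}^{2} ∑_{j=1}^{2} ( λ_{ij}·tr(A_j)·tr(A_i) + μ_{ij}·(A_j + A_jᵀ) : A_i ) ≥ 0, where B : C = ∑_{k,l} B_{kl} C_{kl} denotes the Frobenius pairing and tr is the trace. -/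
open Matrix

/-- Non-negativity of the viscous dissipation: if the quadratic forms associated with
`M = {μ_{ij}}` and `3Λ + 2M` are nonnegative on `ℝ²`, then for all real `3×3` matrices
`A₁, A₂` one has `∑_{i,j} (λ_{ij} tr(A_j) tr(A_i) + μ_{ij} (A_j + A_jᵀ) : A_i) ≥ 0`. -/
theorem dissipation_nonneg
    (Λ M : Matrix (Fin 2) (Fin 2) ℝ)
    (hM : ∀ ξ : Fin 2 → ℝ, 0 ≤ ∑ i, ∑ j, M i j * ξ j * ξ i)
    (hΛM : ∀ ξ : Fin 2 → ℝ, 0 ≤ ∑ i, ∑ j, (3 * Λ i j + 2 * M i j) * ξ j * ξ i)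
    (A : Fin 2 → Matrix (Fin 3) (Fin 3) ℝ) :
    0 ≤ ∑ i, ∑ j,
        (Λ i j * (A j).trace * (A i).trace
          + M i j * ∑ k, ∑ l, ((A j) k l + (A j)ᵀ k l) * (A i) k l) := by
  set t : Fin 2 → ℝ := fun i => (A i).trace with ht
  set D : Fin 2 → Fin 3 → Fin 3 → ℝ :=
    fun i k l => (A i k l + A i l k) / 2 - (if k = l then t i / 3 else 0) with hD
  have key : ∀ i j : Fin 2,
      Λ i j * t j * t i + M i j * ∑ k, ∑ l, ((A j) k l + (A j)ᵀ k l) * (A i) k l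
      = (3 * Λ i j + 2 * M i j) * t j * t i / 3
        + 2 * (M i j * ∑ k, ∑ l, D j k l * D i k l) := by
    intro i j
    simp only [hD, ht, Matrix.trace, Matrix.diag, Matrix.transpose_apply,
      Fin.sum_univ_three]
    norm_num [Fin.ext_iff]
    ring
  have hrw : (∑ i, ∑ j,
        (Λ i j * t j * t i
          + M i j * ∑ k, ∑ l, ((A j) k l + (A j)ᵀ k l) * (A i) k l))
      = (∑ i, ∑ j, (3 * Λ i j + 2 * M i j) * t j * t i) / 3
        + 2 * ∑ k : Fin 3, ∑ l : Fin 3, ∑ i, ∑ j, M i j * D j k l * D i k l := by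
    simp only [Finset.sum_congr rfl fun i _ => Finset.sum_congr rfl fun j _ => key i j]
    simp only [Fin.sum_univ_two, Fin.sum_univ_three]
    ring
  rw [hrw]
  have h1 : 0 ≤ (∑ i, ∑ j, (3 * Λ i j + 2 * M i j) * t j * t i) / 3 :=
    div_nonneg (hΛM t) (by norm_num)
  have h2 : 0 ≤ ∑ k : Fin 3, ∑ l : Fin 3, ∑ i, ∑ j, M i j * D j k l * D i k l :=
    Finset.sum_nonneg fun k _ => Finset.sum_nonneg fun l _ => hM (fun i => D i k l)
  linarith
end

section
/- Let (Ω, μ) be a measure space, let γ > 3, m > 2, M > 0 and δ > 0. Then there exists a constant C > 0, depending only on γ, m, M and δ, such that for all measurable nonnegative functions ρ, θ on Ω with ρ ∈ L^{2γ}(μ), θ ∈ L^{3m}(μ) and ∫_Ω ρ dμ = M, one has ‖ρθ‖²_{L²(μ)} ≤ δ‖θ‖^{m}_{L^{3m}(μ)} + C·‖ρ‖^{κ}_{L^{2γ}(μ)}, where κ = (2γ/(2γ−1))·((3m+2)/(3(m−2))). -/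
/-!
Hölder's inequality with `1/2 = 1/q + 1/(3m)` gives `‖ρθ‖₂ ≤ ‖ρ‖_q ‖θ‖_{3m}`, where
`q = 6m/(3m-2)` lies in `(2, 3)`, hence between `1` and `2γ`. Interpolating `‖ρ‖_q` between
`‖ρ‖₁ = M` and `‖ρ‖_{2γ}`, and then applying Young's inequality with exponents `m/2` and
`m/(m-2)` to `‖ρ‖_q² · ‖θ‖_{3m}²`, absorbs the `θ`-factor into `δ ‖θ‖_{3m}^m`.
-/

open MeasureTheory
open scoped ENNReal

namespace Real

theorem young_inequality_of_nonneg_weighted {a b p q δ : ℝ} (ha : 0 ≤ a) (hb : 0 ≤ b)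
    (hpq : p.HolderConjugate q) (hδ : 0 < δ) :
    a * b ≤ δ * b ^ p + (δ * p) ^ (-(q / p)) / q * a ^ q := by
  have hp := hpq.pos
  set ε := (δ * p) ^ p⁻¹
  have hε : 0 < ε := by positivity
  calc a * b = (a / ε) * (ε * b) := by field_simp
    _ ≤ (a / ε) ^ q / q + (ε * b) ^ p / p :=
        young_inequality_of_nonneg (by positivity) (by positivity) hpq.symm
    _ = δ * b ^ p + (δ * p) ^ (-(q / p)) / q * a ^ q := by
        rw [div_rpow ha hε.le, mul_rpow hε.le hb, ← rpow_mul (by positivity),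
          ← rpow_mul (by positivity), inv_mul_cancel₀ hp.ne', rpow_one,
          rpow_neg (by positivity), inv_mul_eq_div]
        field_simp
        ring

theorem sq_le_mul_rpow_add_mul_rpow_of_le_mul {x A T m δ : ℝ} (hm : 2 < m) (hδ : 0 < δ)
    (hx : 0 ≤ x) (hA : 0 ≤ A) (hT : 0 ≤ T) (h : x ≤ A * T) :
    x ^ 2 ≤ δ * T ^ m +
      (δ * (m / 2)) ^ (-(m / (m - 2) / (m / 2))) / (m / (m - 2)) * A ^ (2 * m / (m - 2)) := by
  have hconj : (m / 2).HolderConjugate (m / (m - 2)) :=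
    holderConjugate_iff.2 ⟨by linarith, by field_simp; ring⟩
  have hT2 : (T ^ 2) ^ (m / 2) = T ^ m := by
    rw [← rpow_natCast, ← rpow_mul hT]; congr 1; push_cast; ring
  have hA2 : (A ^ 2) ^ (m / (m - 2)) = A ^ (2 * m / (m - 2)) := by
    rw [← rpow_natCast, ← rpow_mul hA]; congr 1; push_cast; ring
  calc x ^ 2 ≤ A ^ 2 * T ^ 2 := by rw [← mul_pow]; gcongr
    _ ≤ δ * (T ^ 2) ^ (m / 2) + _ * (A ^ 2) ^ (m / (m - 2)) :=
        young_inequality_of_nonneg_weighted (by positivity) (by positivity) hconj hδ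
    _ = _ := by rw [hT2, hA2]

end Real

section Lp

variable {α E : Type*} [MeasurableSpace α] {μ : Measure α} [NormedAddCommGroup E]

theorem eLpNorm_ofReal_eq_lintegral_rpow {f : α → E} {p : ℝ} (hp : 0 < p) :
    eLpNorm f (.ofReal p) μ = (∫⁻ x, ‖f x‖ₑ ^ p ∂μ) ^ p⁻¹ := by
  rw [eLpNorm_eq_lintegral_rpow_enorm_toReal (by simpa using hp) ENNReal.ofReal_ne_top,
    ENNReal.toReal_ofReal hp.le, one_div]

theorem lintegral_rpow_enorm_eq_eLpNorm_rpow {f : α → E} {p : ℝ} (hp : 0 < p) :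
    ∫⁻ x, ‖f x‖ₑ ^ p ∂μ = eLpNorm f (.ofReal p) μ ^ p := by
  rw [eLpNorm_ofReal_eq_lintegral_rpow hp, ← ENNReal.rpow_mul, inv_mul_cancel₀ hp.ne',
    ENNReal.rpow_one]

/-- Interpolation of `Lᵖ` norms, with the exponent written as `q = a p₀ + b p₁`: then
`1 / q = θ / p₀ + (1 - θ) / p₁` for `θ = a p₀ / q`. -/
theorem eLpNorm_le_eLpNorm_rpow_mul_eLpNorm_rpow {f : α → E} (hf : AEStronglyMeasurable f μ)
    {p₀ p₁ a b : ℝ} (hp₀ : 0 < p₀) (hp₁ : 0 < p₁) (ha : 0 ≤ a) (hb : 0 ≤ b) (hab : a + b = 1) :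
    eLpNorm f (.ofReal (a * p₀ + b * p₁)) μ ≤
      eLpNorm f (.ofReal p₀) μ ^ (a * p₀ / (a * p₀ + b * p₁)) *
        eLpNorm f (.ofReal p₁) μ ^ (b * p₁ / (a * p₀ + b * p₁)) := by
  set q := a * p₀ + b * p₁
  have hq : 0 < q := by nlinarith [mul_nonneg ha hp₀.le, mul_nonneg hb hp₁.le, mul_pos hp₀ hp₁]
  have hint : ∫⁻ x, ‖f x‖ₑ ^ q ∂μ ≤
      (eLpNorm f (.ofReal p₀) μ ^ p₀) ^ a * (eLpNorm f (.ofReal p₁) μ ^ p₁) ^ b := by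
    rw [← lintegral_rpow_enorm_eq_eLpNorm_rpow hp₀, ← lintegral_rpow_enorm_eq_eLpNorm_rpow hp₁]
    calc ∫⁻ x, ‖f x‖ₑ ^ q ∂μ = ∫⁻ x, (‖f x‖ₑ ^ p₀) ^ a * (‖f x‖ₑ ^ p₁) ^ b ∂μ := by
          refine lintegral_congr fun x => ?_
          rw [← ENNReal.rpow_mul, ← ENNReal.rpow_mul,
            ← ENNReal.rpow_add_of_nonneg _ _ (by positivity) (by positivity), mul_comm p₀,
            mul_comm p₁]
      _ ≤ _ := ENNReal.lintegral_mul_norm_pow_le (hf.enorm.pow_const p₀)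
          (hf.enorm.pow_const p₁) ha hb hab
  rw [eLpNorm_ofReal_eq_lintegral_rpow hq]
  calc (∫⁻ x, ‖f x‖ₑ ^ q ∂μ) ^ q⁻¹
      ≤ ((eLpNorm f (.ofReal p₀) μ ^ p₀) ^ a * (eLpNorm f (.ofReal p₁) μ ^ p₁) ^ b) ^ q⁻¹ :=
        ENNReal.rpow_le_rpow hint (by positivity)
    _ = _ := by
        simp only [ENNReal.mul_rpow_of_nonneg _ _ (inv_nonneg.2 hq.le), ← ENNReal.rpow_mul]
        ring_nf

theorem eLpNorm_one_eq_ofReal_integral {f : α → ℝ} (hf : Integrable f μ) (h0 : 0 ≤ᵐ[μ] f) :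
    eLpNorm f 1 μ = ENNReal.ofReal (∫ x, f x ∂μ) := by
  rw [eLpNorm_one_eq_lintegral_enorm, ← ofReal_integral_norm_eq_lintegral_enorm hf]
  congr 1
  exact integral_congr_ae (h0.mono fun x hx => Real.norm_of_nonneg hx)

theorem eLpNorm_mul_le_eLpNorm_one_rpow_mul {𝕜 : Type*} [NormedRing 𝕜] {ρ θ : α → 𝕜}
    (hρ : AEStronglyMeasurable ρ μ) (hθ : AEStronglyMeasurable θ μ) {p q s : ℝ}
    (hq : 1 ≤ q) (hqp : q ≤ p) (hp : 1 < p) (hs : 0 < s) (hqs : q⁻¹ + s⁻¹ = 2⁻¹) :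
    eLpNorm (fun x => ρ x * θ x) 2 μ ≤
      eLpNorm ρ 1 μ ^ ((p - q) / (q * (p - 1))) *
        eLpNorm ρ (.ofReal p) μ ^ (p * (q - 1) / (q * (p - 1))) * eLpNorm θ (.ofReal s) μ := by
  have hp1 : 0 < p - 1 := by linarith
  have : ENNReal.HolderTriple (.ofReal q) (.ofReal s) 2 := by
    refine ⟨?_⟩
    rw [← ENNReal.ofReal_inv_of_pos (by linarith), ← ENNReal.ofReal_inv_of_pos hs,
      ← ENNReal.ofReal_add (by positivity) (by positivity), hqs, ENNReal.ofReal_inv_of_pos two_pos,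
      ENNReal.ofReal_ofNat]
  have hinterp := eLpNorm_le_eLpNorm_rpow_mul_eLpNorm_rpow hρ one_pos (by linarith : 0 < p)
    (div_nonneg (sub_nonneg.2 hqp) hp1.le) (div_nonneg (sub_nonneg.2 hq) hp1.le)
    (by field_simp; ring)
  have hq_eq : (p - q) / (p - 1) * 1 + (q - 1) / (p - 1) * p = q := by field_simp; ring
  rw [hq_eq, ENNReal.ofReal_one] at hinterp
  calc eLpNorm (fun x => ρ x * θ x) 2 μ ≤ eLpNorm ρ (.ofReal q) μ * eLpNorm θ (.ofReal s) μ :=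
        eLpNorm_smul_le_mul_eLpNorm (𝕜 := 𝕜) hθ hρ
    _ ≤ _ := by
        gcongr
        refine hinterp.trans_eq ?_
        congr 2 <;> field_simp

theorem toReal_eLpNorm_mul_le_eLpNorm_one_rpow_mul {ρ θ : α → ℝ} {p q s : ℝ}
    (hρ₁ : MemLp ρ 1 μ) (hρ : MemLp ρ (.ofReal p) μ) (hθ : MemLp θ (.ofReal s) μ)
    (hq : 1 ≤ q) (hqp : q ≤ p) (hp : 1 < p) (hs : 0 < s) (hqs : q⁻¹ + s⁻¹ = 2⁻¹) :
    (eLpNorm (fun x => ρ x * θ x) 2 μ).toReal ≤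
      (eLpNorm ρ 1 μ).toReal ^ ((p - q) / (q * (p - 1))) *
        (eLpNorm ρ (.ofReal p) μ).toReal ^ (p * (q - 1) / (q * (p - 1))) *
          (eLpNorm θ (.ofReal s) μ).toReal := by
  have hden : 0 < q * (p - 1) := by nlinarith
  have hfin : eLpNorm ρ 1 μ ^ ((p - q) / (q * (p - 1))) *
      eLpNorm ρ (.ofReal p) μ ^ (p * (q - 1) / (q * (p - 1))) * eLpNorm θ (.ofReal s) μ ≠ ⊤ :=
    ENNReal.mul_ne_top (ENNReal.mul_ne_top
      (ENNReal.rpow_ne_top_of_nonneg (div_nonneg (by linarith) hden.le) hρ₁.eLpNorm_ne_top)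
      (ENNReal.rpow_ne_top_of_nonneg (div_nonneg (by nlinarith) hden.le) hρ.eLpNorm_ne_top))
      hθ.eLpNorm_ne_top
  simpa only [ENNReal.toReal_mul, ← ENNReal.toReal_rpow] using ENNReal.toReal_mono hfin
    (eLpNorm_mul_le_eLpNorm_one_rpow_mul hρ.1 hθ.1 hq hqp hp hs hqs)

end Lp

/-- Inequality (estimrhotheta): for `γ > 3`, `m > 2`, `M > 0`, `δ > 0` there is
`C > 0` depending only on these data such that for all measurable nonnegative
`ρ ∈ L^{2γ}`, `θ ∈ L^{3m}` with `∫ ρ = M`,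
`‖ρθ‖₂² ≤ δ‖θ‖_{3m}^m + C‖ρ‖_{2γ}^κ`, where `κ = (2γ/(2γ−1))·((3m+2)/(3(m−2)))`. -/
theorem rho_theta_L2_bound
    {Ω : Type*} [MeasurableSpace Ω] (μ : Measure Ω)
    (γ m M δ : ℝ) (hγ : 3 < γ) (hm : 2 < m) (hM : 0 < M) (hδ : 0 < δ) :
    ∃ C : ℝ, 0 < C ∧ ∀ ρ θ : Ω → ℝ,
      Measurable ρ → Measurable θ → (∀ x, 0 ≤ ρ x) → (∀ x, 0 ≤ θ x) →
      MemLp ρ (ENNReal.ofReal (2 * γ)) μ → MemLp θ (ENNReal.ofReal (3 * m)) μ →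
      (∫ x, ρ x ∂μ) = M →
      (eLpNorm (fun x => ρ x * θ x) 2 μ).toReal ^ (2 : ℕ)
        ≤ δ * (eLpNorm θ (ENNReal.ofReal (3 * m)) μ).toReal ^ m
          + C * (eLpNorm ρ (ENNReal.ofReal (2 * γ)) μ).toReal
              ^ ((2 * γ / (2 * γ - 1)) * ((3 * m + 2) / (3 * (m - 2)))) := by
  have h3m : 0 < 3 * m - 2 := by linarith
  obtain ⟨q, hqm⟩ : ∃ q, q * (3 * m - 2) = 6 * m := ⟨_, div_mul_cancel₀ _ h3m.ne'⟩
  have hq : 1 ≤ q := by nlinarith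
  have hq3 : q ≤ 2 * γ := by nlinarith
  have hqs : q⁻¹ + (3 * m)⁻¹ = 2⁻¹ := by field_simp; linear_combination -hqm
  have hκ : 2 * γ * (q - 1) / (q * (2 * γ - 1)) * (2 * m / (m - 2)) =
      2 * γ / (2 * γ - 1) * ((3 * m + 2) / (3 * (m - 2))) := by
    have : 2 * γ - 1 ≠ 0 := by linarith
    have : m - 2 ≠ 0 := by linarith
    have : q ≠ 0 := by linarith
    field_simp
    linear_combination hqm
  refine ⟨(δ * (m / 2)) ^ (-(m / (m - 2) / (m / 2))) / (m / (m - 2)) *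
      M ^ ((2 * γ - q) / (q * (2 * γ - 1)) * (2 * m / (m - 2))),
    by positivity, fun ρ θ _ _ hρ0 _ hρ hθ hmass => ?_⟩
  have hρint : Integrable ρ μ := Integrable.of_integral_ne_zero (by linarith)
  have hρ1 : (eLpNorm ρ 1 μ).toReal = M := by
    rw [eLpNorm_one_eq_ofReal_integral hρint (.of_forall hρ0), hmass, ENNReal.toReal_ofReal hM.le]
  have hL2 := toReal_eLpNorm_mul_le_eLpNorm_one_rpow_mul (memLp_one_iff_integrable.2 hρint) hρ hθ
    hq hq3 (by linarith) (by linarith) hqs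
  rw [hρ1] at hL2
  refine (Real.sq_le_mul_rpow_add_mul_rpow_of_le_mul hm hδ ENNReal.toReal_nonneg (by positivity)
    ENNReal.toReal_nonneg hL2).trans_eq ?_
  rw [Real.mul_rpow (x := M ^ _) (by positivity) (by positivity), ← Real.rpow_mul hM.le,
    ← Real.rpow_mul ENNReal.toReal_nonneg, hκ]
  ring
end

section
/- Let (Ω, μ) be a finite measure space and γ > 1. Let ρ, θ, g : Ω → ℝ be measurable with ρ ≥ 0 a.e., θ ≥ 0 a.e., ρ^γ ∈ L¹(μ), θ ∈ L¹(μ), ρθ ∈ L¹(μ), g ∈ L¹(μ), and g ≥ ρ^γ a.e. Suppose that for every bounded measurable ψ : Ω → ℝ with ψ ≥ 0 and every λ ∈ (0,1] one has ∫_Ω (g + ρθ)ψ dμ ≤ ∫_Ω ((ρ+λψ)^γ + (ρ+λψ)θ)ψ dμ. Then g = ρ^γ a.e. on Ω. -/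
open MeasureTheory Filter

/-- Minty-type identification of the weak limit of the pressures: if `g ≥ ρ^γ` a.e. and
`∫ (g + ρθ)ψ ≤ ∫ ((ρ+λψ)^γ + (ρ+λψ)θ)ψ` for every bounded measurable `ψ ≥ 0` and every
`λ ∈ (0,1]`, then `g = ρ^γ` a.e. -/
theorem minty_identification
    {Ω : Type*} [MeasurableSpace Ω] (μ : Measure Ω) [IsFiniteMeasure μ]
    (γ : ℝ) (hγ : 1 < γ)
    (ρ θ g : Ω → ℝ)
    (hρm : Measurable ρ) (hθm : Measurable θ) (hgm : Measurable g)
    (hρ0 : ∀ᵐ x ∂μ, 0 ≤ ρ x) (hθ0 : ∀ᵐ x ∂μ, 0 ≤ θ x)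
    (hργ : Integrable (fun x => ρ x ^ γ) μ)
    (hθi : Integrable θ μ)
    (hρθ : Integrable (fun x => ρ x * θ x) μ)
    (hgi : Integrable g μ)
    (hgγ : ∀ᵐ x ∂μ, ρ x ^ γ ≤ g x)
    (hineq : ∀ ψ : Ω → ℝ, Measurable ψ → (∀ x, 0 ≤ ψ x) → (∃ B : ℝ, ∀ x, ψ x ≤ B) →
      ∀ l : ℝ, 0 < l → l ≤ 1 →
      (∫ x, (g x + ρ x * θ x) * ψ x ∂μ)
        ≤ ∫ x, ((ρ x + l * ψ x) ^ γ + (ρ x + l * ψ x) * θ x) * ψ x ∂μ) :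
    ∀ᵐ x ∂μ, g x = ρ x ^ γ := by
  have hγ0 : (0:ℝ) < γ := lt_trans one_pos hγ
  -- the sequence of parameters
  set l : ℕ → ℝ := fun n => 1 / (n + 1) with hl
  have hl0 : ∀ n, 0 < l n := fun n => by positivity
  have hl1 : ∀ n, l n ≤ 1 := by
    intro n
    rw [hl]
    rw [div_le_one (by positivity)]
    linarith [Nat.cast_nonneg (α := ℝ) n]
  have hltend : Tendsto l atTop (nhds 0) := tendsto_one_div_add_atTop_nhds_zero_nat
  -- test functions
  set F : ℕ → Ω → ℝ := fun n x => (ρ x + l n) ^ γ + (ρ x + l n) * θ x with hF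
  -- key inequality from hineq with ψ = 1
  have key : ∀ n, (∫ x, g x + ρ x * θ x ∂μ) ≤ ∫ x, F n x ∂μ := by
    intro n
    have := hineq (fun _ => 1) measurable_const (fun _ => zero_le_one) ⟨1, fun _ => le_rfl⟩
      (l n) (hl0 n) (hl1 n)
    simpa [hF] using this
  -- dominating function
  set bound : Ω → ℝ := fun x =>
    2 ^ γ * (ρ x ^ γ + 1) + (ρ x * θ x + θ x) with hbd
  have hbound_int : Integrable bound μ := by
    apply Integrable.add
    · exact (hργ.add (integrable_const 1)).const_mul _
    · exact hρθ.add hθi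
  have hFmeas : ∀ n, AEStronglyMeasurable (F n) μ := by
    intro n
    exact (((hρm.add measurable_const).pow_const γ).add
      ((hρm.add measurable_const).mul hθm)).aestronglyMeasurable
  have hFbound : ∀ n, ∀ᵐ x ∂μ, ‖F n x‖ ≤ bound x := by
    intro n
    filter_upwards [hρ0, hθ0] with x hx hθx
    have h1 : 0 < ρ x + l n := by linarith [hl0 n]
    have hle1 : ρ x + l n ≤ ρ x + 1 := by linarith [hl1 n]
    have h2 : (ρ x + l n) ^ γ ≤ 2 ^ γ * (ρ x ^ γ + 1) := by
      have hm : ρ x + l n ≤ 2 * max (ρ x) 1 := by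
        rcases le_total (ρ x) 1 with h | h
        · have : max (ρ x) 1 = 1 := max_eq_right h
          rw [this]; linarith [hl1 n]
        · have : max (ρ x) 1 = ρ x := max_eq_left h
          rw [this]; linarith [hl1 n]
      calc (ρ x + l n) ^ γ ≤ (2 * max (ρ x) 1) ^ γ :=
            Real.rpow_le_rpow (le_of_lt h1) hm hγ0.le
        _ = 2 ^ γ * (max (ρ x) 1) ^ γ := by
            rw [Real.mul_rpow (by norm_num) (le_max_of_le_right zero_le_one)]
        _ ≤ 2 ^ γ * (ρ x ^ γ + 1) := by
            apply mul_le_mul_of_nonneg_left _ (Real.rpow_nonneg (by norm_num) γ)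
            rcases le_total (ρ x) 1 with h | h
            · rw [max_eq_right h, Real.one_rpow]
              nlinarith [Real.rpow_nonneg hx γ]
            · rw [max_eq_left h]
              nlinarith
        
    have h3 : (ρ x + l n) * θ x ≤ ρ x * θ x + θ x := by
      nlinarith [hl1 n]
    have hFnn : 0 ≤ F n x := by
      have := Real.rpow_nonneg h1.le γ
      have : 0 ≤ (ρ x + l n) * θ x := mul_nonneg h1.le hθx
      positivity
    rw [Real.norm_eq_abs, abs_of_nonneg hFnn]
    simp only [hF, hbd]
    linarith
  have hFlim : ∀ᵐ x ∂μ, Tendsto (fun n => F n x) atTop (nhds (ρ x ^ γ + ρ x * θ x)) := by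
    filter_upwards [hρ0] with x hx
    have hb : Tendsto (fun n => ρ x + l n) atTop (nhds (ρ x)) := by
      have := (tendsto_const_nhds (x := ρ x)).add hltend
      simpa using this
    have hcont : ContinuousAt (fun t : ℝ => t ^ γ) (ρ x) :=
      Real.continuousAt_rpow_const (ρ x) γ (Or.inr hγ0.le)
    exact (hcont.tendsto.comp hb).add (hb.mul tendsto_const_nhds)
  have hlim : Tendsto (fun n => ∫ x, F n x ∂μ) atTop
      (nhds (∫ x, ρ x ^ γ + ρ x * θ x ∂μ)) :=
    tendsto_integral_of_dominated_convergence bound hFmeas hbound_int hFbound hFlim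
  have hfin : (∫ x, g x + ρ x * θ x ∂μ) ≤ ∫ x, ρ x ^ γ + ρ x * θ x ∂μ :=
    ge_of_tendsto hlim (Eventually.of_forall key)
  rw [integral_add hgi hρθ, integral_add hργ hρθ] at hfin
  have hintle : (∫ x, g x ∂μ) ≤ ∫ x, ρ x ^ γ ∂μ := by linarith
  -- conclude via nonnegativity
  have hsub : Integrable (fun x => g x - ρ x ^ γ) μ := hgi.sub hργ
  have hzero : (∫ x, g x - ρ x ^ γ ∂μ) = 0 := by
    have := integral_sub hgi hργ
    have hnn : 0 ≤ ∫ x, g x - ρ x ^ γ ∂μ :=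
      integral_nonneg_of_ae (by filter_upwards [hgγ] with x h; simp only [Pi.zero_apply]; linarith)
    rw [this] at hnn ⊢
    linarith
  have := (integral_eq_zero_iff_of_nonneg_ae
    (by filter_upwards [hgγ] with x h; dsimp; linarith) hsub).mp hzero
  filter_upwards [this] with x hx
  have : g x - ρ x ^ γ = 0 := hx
  linarith
end
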